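/- Let n > 1 be an integer, R = ℤ/nℤ, and R^× its group of units. Let D(R^×) denote the least positive integer ℓ such that every multiset over R^× of cardinality ℓ has a nonempty sub-multiset with product 1, and let I(S_R) denote the least positive integer ℓ such that every multiset over R of cardinality ℓ has a nonempty sub-multiset whose product x satisfies x·x = x. Then I(S_R) ≥ D(R^×) + Ω(n) − ω(n). -/

import Mathlib

/-- The Davenport constant of the unit group `(ℤ/nℤ)ˣ`: the least positive integer `ℓ` such
that every multiset over `(ℤ/nℤ)ˣ` of cardinality `ℓ` has a nonempty sub-multiset with
product `1`. -/
noncomputable def davenportUnits (n : ℕ) : ℕ :=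
  sInf {ℓ : ℕ | 0 < ℓ ∧ ∀ T : Multiset (ZMod n)ˣ, T.card = ℓ →
    ∃ W : Multiset (ZMod n)ˣ, W ≤ T ∧ W ≠ 0 ∧ W.prod = 1}

/-- The `n`-modular Erdős–Burgess constant: the least positive integer `ℓ` such that every
multiset over `ℤ/nℤ` of cardinality `ℓ` has a nonempty sub-multiset whose product `x`
satisfies `x * x = x`. -/
noncomputable def modularErdosBurgess (n : ℕ) : ℕ :=
  sInf {ℓ : ℕ | 0 < ℓ ∧ ∀ T : Multiset (ZMod n), T.card = ℓ →
    ∃ W : Multiset (ZMod n), W ≤ T ∧ W ≠ 0 ∧ W.prod * W.prod = W.prod}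

/-!
Take a multiset `U` of `D(Rˣ) - 1` units with no nonempty sub-multiset of product `1`, and add
the prime factors of `n / rad n`, counted with multiplicity (there are `Ω(n) - ω(n)` of them).
A sub-product has the form `u * m` with `u` a unit and `m ∣ n / rad n`, so no full prime power
`p ^ v_p(n)` divides it. Since `x² ≡ x (mod n)` forces `x ≡ 0` or `x ≡ 1 (mod p ^ v_p(n))` for
every `p ∣ n`, an idempotent sub-product is coprime to `n`; then `m = 1` and `u` is an
idempotent unit, i.e. `u = 1`, contradicting the choice of `U`.
-/

namespace Multiset

variable {α β : Type*}

theorem exists_le_map_eq_of_le_map {f : α → β} {s : Multiset β} {t : Multiset α}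
    (h : s ≤ t.map f) : ∃ u ≤ t, u.map f = s := by
  induction s using Quotient.inductionOn with | h l₁ => ?_
  induction t using Quotient.inductionOn with | h l₂ => ?_
  obtain ⟨l, hperm, hsub⟩ := coe_le.mp h
  obtain ⟨l', hsub', rfl⟩ := List.sublist_map_iff.mp hsub
  exact ⟨l', coe_le.mpr hsub'.subperm, Quotient.sound hperm⟩

theorem exists_le_le_eq_add_of_le_add [DecidableEq α] {s t u : Multiset α} (h : s ≤ t + u) :
    ∃ t' ≤ t, ∃ u' ≤ u, s = t' + u' :=
  ⟨s ∩ t, inter_le_right, s - t, Multiset.sub_le_iff_le_add'.mpr h,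
    ((add_comm _ _).trans (sub_add_inter s t)).symm⟩

theorem exists_le_card_eq {s : Multiset α} {n : ℕ} (hn : n ≤ card s) : ∃ t ≤ s, card t = n := by
  obtain ⟨t, ht⟩ := card_pos_iff_exists_mem.mp ((card_powersetCard n s).symm ▸ Nat.choose_pos hn)
  exact ⟨t, mem_powersetCard.mp ht⟩

def Forces (P : Multiset α → Prop) (ℓ : ℕ) : Prop :=
  0 < ℓ ∧ ∀ T : Multiset α, T.card = ℓ → ∃ W : Multiset α, W ≤ T ∧ W ≠ 0 ∧ P W

def Avoids (P : Multiset α → Prop) (T : Multiset α) : Prop :=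
  ∀ W ≤ T, W ≠ 0 → ¬ P W

noncomputable def forcingNumber (P : Multiset α → Prop) : ℕ :=
  sInf {ℓ | Forces P ℓ}

variable {P : Multiset α → Prop}

theorem Avoids.mono {T T' : Multiset α} (hT : Avoids P T) (h : T' ≤ T) : Avoids P T' :=
  fun W hW => hT W (hW.trans h)

theorem exists_card_eq_forcingNumber_sub_one_avoids :
    ∃ T : Multiset α, card T = forcingNumber P - 1 ∧ Avoids P T := by
  rcases Nat.eq_zero_or_pos (forcingNumber P - 1) with h | h
  · exact ⟨0, h ▸ card_zero, fun W hW hW0 => absurd (le_zero.mp hW) hW0⟩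
  · have hnot : ¬ Forces P (forcingNumber P - 1) :=
      Nat.notMem_of_lt_sInf (s := {ℓ | Forces P ℓ}) (Nat.sub_one_lt (by omega))
    simp only [Forces, h, true_and, not_forall, not_exists, not_and] at hnot
    obtain ⟨T, hT, hW⟩ := hnot
    exact ⟨T, hT, hW⟩

theorem card_lt_forcingNumber {ℓ : ℕ} (hℓ : Forces P ℓ) {T : Multiset α} (hT : Avoids P T) :
    card T < forcingNumber P := by
  have hmem : Forces P (forcingNumber P) := Nat.sInf_mem (s := {ℓ | Forces P ℓ}) ⟨ℓ, hℓ⟩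
  by_contra! hle
  obtain ⟨T', hT', hcard⟩ := exists_le_card_eq hle
  obtain ⟨W, hW, hW0, hPW⟩ := hmem.2 T' hcard
  exact hT.mono hT' W hW hW0 hPW

end Multiset

theorem davenportUnits_eq_forcingNumber (n : ℕ) :
    davenportUnits n = Multiset.forcingNumber fun W : Multiset (ZMod n)ˣ => W.prod = 1 :=
  rfl

theorem modularErdosBurgess_eq_forcingNumber (n : ℕ) :
    modularErdosBurgess n =
      Multiset.forcingNumber fun W : Multiset (ZMod n) => IsIdempotentElem W.prod :=
  rfl

theorem exists_isIdempotentElem_pow {M : Type*} [Monoid M] [Finite M] (x : M) :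
    ∃ m ≠ 0, IsIdempotentElem (x ^ m) := by
  obtain ⟨i, j, hij, hx⟩ := Finite.exists_ne_map_eq_of_infinite (x ^ · : ℕ → M)
  wlog hlt : i < j generalizing i j
  · exact this j i hij.symm hx.symm (by omega)
  obtain ⟨d, rfl⟩ := Nat.exists_eq_add_of_lt hlt
  have hper : ∀ k, x ^ (i + k * (d + 1)) = x ^ i := by
    intro k
    induction k with
    | zero => simp
    | succ k ih =>
      rw [add_mul, one_mul, ← add_assoc, pow_add, ih, ← pow_add, ← add_assoc]
      exact hx.symm
  -- `k ↦ x ^ k` has period `d + 1` from `i` on; take a multiple of the period beyond `i`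
  refine ⟨(i + 1) * (d + 1), by positivity, ?_⟩
  have hi : i ≤ (i + 1) * (d + 1) := by nlinarith
  calc x ^ ((i + 1) * (d + 1)) * x ^ ((i + 1) * (d + 1))
      = x ^ ((i + 1) * (d + 1) - i) * x ^ (i + (i + 1) * (d + 1)) := by
        rw [← pow_add, ← pow_add]; congr 1; omega
    _ = x ^ ((i + 1) * (d + 1)) := by
        rw [hper, ← pow_add, Nat.sub_add_cancel hi]

theorem exists_forces_isIdempotentElem_prod (M : Type*) [CommMonoid M] [Finite M] :
    ∃ ℓ, Multiset.Forces (fun W : Multiset M => IsIdempotentElem W.prod) ℓ := by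
  classical
  have := Fintype.ofFinite M
  choose e he0 he using exists_isIdempotentElem_pow (M := M)
  refine ⟨∑ x, e x, Finset.sum_pos (fun x _ => Nat.pos_of_ne_zero (he0 x)) Finset.univ_nonempty,
    fun T hT => ?_⟩
  -- pigeonhole, as `card T = ∑ x, e x`
  obtain ⟨x, hx⟩ : ∃ x, e x ≤ T.count x := by
    by_contra! h
    have := Finset.sum_lt_sum_of_nonempty Finset.univ_nonempty fun x _ => h x
    rw [Multiset.sum_count_eq_card fun a _ => Finset.mem_univ a] at this
    omega
  refine ⟨Multiset.replicate (e x) x, Multiset.le_count_iff_replicate_le.mp hx,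
    fun h0 => he0 x (by simpa using congrArg Multiset.card h0), ?_⟩
  simpa only [Multiset.prod_replicate] using he x

theorem ZMod.natCast_coprime_of_isIdempotentElem {n N : ℕ} (h : IsIdempotentElem (N : ZMod n))
    (hN : ∀ p, p.Prime → p ∣ n → ¬ p ^ n.factorization p ∣ N) : N.Coprime n := by
  by_contra hnc
  obtain ⟨p, hp, hpN, hpn⟩ := Nat.Prime.not_coprime_iff_dvd.mp hnc
  refine hN p hp hpn (Int.natCast_dvd_natCast.mp ?_)
  have hdvd : (n : ℤ) ∣ N * (N - 1) := by
    rw [← ZMod.intCast_zmod_eq_zero_iff_dvd]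
    push_cast
    rw [mul_sub, mul_one, h.eq, sub_self]
  obtain ⟨c, hc⟩ := Int.natCast_dvd_natCast.mpr hpN
  -- `p ∣ N` makes `p` coprime to `N - 1`
  have hcop : IsCoprime ((p : ℤ) ^ n.factorization p) (N - 1) :=
    IsCoprime.pow_left ⟨c, -1, by rw [hc]; ring⟩
  exact hcop.dvd_of_dvd_mul_right
    ((Int.natCast_dvd_natCast.mpr (Nat.ordProj_dvd n p)).trans (by exact_mod_cast hdvd))

namespace Nat

/-- The prime factors of `n / rad n`, with multiplicity. -/
def excessPrimeFactors (n : ℕ) : Multiset ℕ :=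
  (n.primeFactorsList : Multiset ℕ) - Multiset.dedup n.primeFactorsList

theorem card_excessPrimeFactors_add (n : ℕ) :
    Multiset.card n.excessPrimeFactors + n.primeFactors.card = n.primeFactorsList.length := by
  rw [excessPrimeFactors, Multiset.card_sub (Multiset.dedup_le _), Nat.primeFactors,
    List.card_toFinset, Multiset.coe_card, Multiset.coe_dedup, Multiset.coe_card]
  exact Nat.sub_add_cancel (List.dedup_sublist _).length_le

theorem mem_primeFactorsList_of_mem_excessPrimeFactors {n q : ℕ}
    (hq : q ∈ n.excessPrimeFactors) : q ∈ n.primeFactorsList :=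
  Multiset.mem_coe.mp (Multiset.mem_of_le tsub_le_self hq)

theorem not_ordProj_dvd_prod_of_le_excessPrimeFactors {n p : ℕ} (hn : n ≠ 0) (hp : p.Prime)
    (hpn : p ∣ n) {Q : Multiset ℕ} (hQ : Q ≤ n.excessPrimeFactors) :
    ¬ p ^ n.factorization p ∣ Q.prod := by
  intro hdvd
  have hsplit : n.excessPrimeFactors.prod * (Multiset.dedup n.primeFactorsList).prod = n := by
    rw [excessPrimeFactors, ← Multiset.prod_add, tsub_add_cancel_of_le (Multiset.dedup_le _),
      Multiset.prod_coe, Nat.prod_primeFactorsList hn]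
  have hp_rad : p ∣ (Multiset.dedup n.primeFactorsList).prod :=
    Multiset.dvd_prod (Multiset.mem_dedup.mpr (Multiset.mem_coe.mpr
      ((Nat.mem_primeFactorsList hn).mpr ⟨hp, hpn⟩)))
  have := mul_dvd_mul (hdvd.trans (Multiset.prod_dvd_prod_of_le hQ)) hp_rad
  rw [hsplit, ← pow_succ] at this
  exact Nat.pow_succ_factorization_not_dvd hn hp this

end Nat

theorem avoids_isIdempotentElem_prod_units_add_excessPrimeFactors {n : ℕ} [NeZero n]
    {U : Multiset (ZMod n)ˣ} (hU : U.Avoids fun W => W.prod = 1) :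
    (U.map ((↑) : (ZMod n)ˣ → ZMod n) + n.excessPrimeFactors.map ((↑) : ℕ → ZMod n)).Avoids
      fun W => IsIdempotentElem W.prod := by
  classical
  intro W hW hW0 hidem
  obtain ⟨_, hWU, _, hWQ, rfl⟩ := Multiset.exists_le_le_eq_add_of_le_add hW
  obtain ⟨V, hVU, rfl⟩ := Multiset.exists_le_map_eq_of_le_map hWU
  obtain ⟨Q, hQ, rfl⟩ := Multiset.exists_le_map_eq_of_le_map hWQ
  have hQprime : ∀ q ∈ Q, q ∈ n.primeFactorsList := fun q hq =>
    Nat.mem_primeFactorsList_of_mem_excessPrimeFactors (Multiset.mem_of_le hQ hq)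
  set a := (V.prod : ZMod n).val
  have hV : ((V.prod : (ZMod n)ˣ) : ZMod n) = (V.map (↑)).prod :=
    map_multiset_prod (Units.coeHom _) V
  have hprod : (V.map ((↑) : (ZMod n)ˣ → ZMod n) + Q.map ((↑) : ℕ → ZMod n)).prod =
      ((a * Q.prod : ℕ) : ZMod n) := by
    rw [Multiset.prod_add, ← hV, Nat.cast_mul, ZMod.natCast_zmod_val,
      Nat.cast_multiset_prod]
  have hcop : (a * Q.prod).Coprime n := by
    refine ZMod.natCast_coprime_of_isIdempotentElem (hprod ▸ hidem) fun p hp hpn hdvd => ?_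
    have ha : (p ^ n.factorization p).Coprime a :=
      ((ZMod.val_coe_unit_coprime _).coprime_dvd_right (Nat.ordProj_dvd n p)).symm
    exact Nat.not_ordProj_dvd_prod_of_le_excessPrimeFactors (NeZero.ne n) hp hpn hQ
      (ha.dvd_of_dvd_mul_left hdvd)
  have hQ0 : Q = 0 := Multiset.eq_zero_of_forall_notMem fun q hq =>
    (Nat.prime_of_mem_primeFactorsList (hQprime q hq)).ne_one <|
      Nat.Coprime.eq_one_of_dvd (hcop.coprime_dvd_left (dvd_mul_of_dvd_right
        (Multiset.dvd_prod hq) a)) (Nat.dvd_of_mem_primeFactorsList (hQprime q hq))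
  subst hQ0
  simp only [Multiset.map_zero, add_zero, ne_eq, Multiset.map_eq_zero] at hW0 hidem
  rw [← hV] at hidem
  exact hU V hVU hW0 (mul_eq_left.mp (Units.ext hidem))

/-- `I(S_R) ≥ D(Rˣ) + Ω(n) - ω(n)` for `R = ℤ/nℤ`, `n > 1`. -/
theorem stmt_3 (n : ℕ) (hn : 1 < n) :
    davenportUnits n + n.primeFactorsList.length - n.primeFactors.card ≤
      modularErdosBurgess n := by
  have : NeZero n := ⟨by omega⟩
  rw [davenportUnits_eq_forcingNumber, modularErdosBurgess_eq_forcingNumber]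
  obtain ⟨U, hUcard, hU⟩ := Multiset.exists_card_eq_forcingNumber_sub_one_avoids
    (P := fun W : Multiset (ZMod n)ˣ => W.prod = 1)
  obtain ⟨ℓ, hℓ⟩ := exists_forces_isIdempotentElem_prod (ZMod n)
  have hlt := Multiset.card_lt_forcingNumber hℓ
    (avoids_isIdempotentElem_prod_units_add_excessPrimeFactors hU)
  have hcard := n.card_excessPrimeFactors_add
  rw [Multiset.card_add, Multiset.card_map, Multiset.card_map, hUcard] at hlt
  omega
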